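/- arXiv:1001.5416 — 2 statements merged into one kernel-verified Lean document; each statement's English description precedes it below -/
import Mathlib

section
/- For κ = 15, with ⟨x⟩ = sin(πx/15)/sin(π/15) for real x, the following identities hold: ⟨1⟩·⟨3⟩ / (⟨1/2⟩·⟨3/2⟩) = (√5 + √(15 + 6√5))/2 and ⟨5/2⟩·⟨3⟩ / (⟨1⟩·⟨3/2⟩) = (5 + 3√5 + √(6(5+√5)))/4. -/
/-!
With `θ = π/30`, the normalisations `sin(π/15)` cancel and the double-angle formula turns the
two ratios into `4 cos θ cos 3θ = 2 (cos 2θ + cos 4θ)` and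
`sin 5θ · 2 cos 3θ / sin 2θ = cos(π/10) / sin(π/15)`. Since `π/15 = 2π/5 - π/3`, everything is
then expressed through `√3`, `√5` and `4 sin(2π/5) = √(10 + 2√5)`, and both identities become
polynomial identities in these three radicals.
-/

/-- The q-number at altitude `κ`: `⟨x⟩ = sin(πx/κ)/sin(π/κ)`. -/
noncomputable def qnum (κ x : ℝ) : ℝ := Real.sin (Real.pi * x / κ) / Real.sin (Real.pi / κ)

open Real

lemma qnum_mul_div_qnum_mul {κ : ℝ} (hκ : sin (π / κ) ≠ 0) (a b c d : ℝ) :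
    qnum κ a * qnum κ b / (qnum κ c * qnum κ d)
      = sin (π * a / κ) * sin (π * b / κ) / (sin (π * c / κ) * sin (π * d / κ)) := by
  unfold qnum
  rw [div_mul_div_comm, div_mul_div_comm, div_div_div_cancel_right₀ (mul_ne_zero hκ hκ)]

lemma sin_pi_div_pos {n : ℝ} (hn : 1 < n) : 0 < sin (π / n) :=
  sin_pos_of_pos_of_lt_pi (div_pos pi_pos (by linarith)) (div_lt_self pi_pos hn)

lemma sin_two_mul_div_sin {x : ℝ} (hx : sin x ≠ 0) : sin (2 * x) / sin x = 2 * cos x := by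
  rw [sin_two_mul, mul_right_comm, mul_div_cancel_right₀ _ hx]

lemma cos_two_pi_div_five : cos (2 * π / 5) = (√5 - 1) / 4 := by
  rw [mul_div_assoc, cos_two_mul, cos_pi_div_five]
  linear_combination (1 / 8 : ℝ) * sq_sqrt (show (0 : ℝ) ≤ 5 by norm_num)

lemma sin_two_pi_div_five : sin (2 * π / 5) = √(10 + 2 * √5) / 4 := by
  have h5 := sq_sqrt (show (0 : ℝ) ≤ 5 by norm_num)
  rw [sin_eq_sqrt_one_sub_cos_sq (by positivity) (by linarith [pi_pos]), cos_two_pi_div_five,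
    show 1 - ((√5 - 1) / 4) ^ 2 = (10 + 2 * √5) / 4 ^ 2 by linear_combination -h5 / 16,
    sqrt_div' _ (by norm_num), sqrt_sq (by norm_num)]

lemma cos_pi_div_ten : cos (π / 10) = √(10 + 2 * √5) / 4 := by
  rw [← sin_two_pi_div_five, ← sin_pi_div_two_sub]
  ring_nf

lemma cos_pi_div_fifteen : cos (π / 15) = (√3 * √(10 + 2 * √5) + √5 - 1) / 8 := by
  rw [show π / 15 = 2 * π / 5 - π / 3 by ring, cos_sub, cos_two_pi_div_five, sin_two_pi_div_five,
    cos_pi_div_three, sin_pi_div_three]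
  ring

lemma sin_pi_div_fifteen : sin (π / 15) = (√(10 + 2 * √5) - √3 * (√5 - 1)) / 8 := by
  rw [show π / 15 = 2 * π / 5 - π / 3 by ring, sin_sub, cos_two_pi_div_five, sin_two_pi_div_five,
    cos_pi_div_three, sin_pi_div_three]
  ring

lemma four_mul_cos_mul_cos_three_mul (x : ℝ) :
    4 * cos x * cos (3 * x) = 2 * (2 * cos (2 * x) ^ 2 + cos (2 * x) - 1) := by
  have h := cos_add_cos (4 * x) (2 * x)
  rw [show (4 * x + 2 * x) / 2 = 3 * x by ring, show (4 * x - 2 * x) / 2 = x by ring,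
    show 4 * x = 2 * (2 * x) by ring, cos_two_mul] at h
  linear_combination -2 * h

lemma sqrt_fifteen_add_six_mul_sqrt_five :
    √(15 + 6 * √5) = √3 * √(10 + 2 * √5) * (1 + √5) / 4 := by
  have h3 := sq_sqrt (show (0 : ℝ) ≤ 3 by norm_num)
  have h5 := sq_sqrt (show (0 : ℝ) ≤ 5 by norm_num)
  have ha := sq_sqrt (show (0 : ℝ) ≤ 10 + 2 * √5 by positivity)
  rw [sqrt_eq_iff_eq_sq (by positivity) (by positivity), div_pow, mul_pow, mul_pow, h3, ha]
  linear_combination (-3 * (14 + 2 * √5) / 16) * h5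

lemma sqrt_six_mul_five_add_sqrt_five : √(6 * (5 + √5)) = √3 * √(10 + 2 * √5) := by
  rw [← sqrt_mul (by norm_num)]
  ring_nf

lemma qdim_spinorial_eq :
    qnum 15 1 * qnum 15 3 / (qnum 15 (1/2) * qnum 15 (3/2))
      = 2 * (2 * cos (π / 15) ^ 2 + cos (π / 15) - 1) := by
  have h30 := (sin_pi_div_pos (by norm_num : (1 : ℝ) < 30)).ne'
  have h10 := (sin_pi_div_pos (by norm_num : (1 : ℝ) < 10)).ne'
  rw [qnum_mul_div_qnum_mul (sin_pi_div_pos (by norm_num)).ne', mul_div_mul_comm,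
    show π * 1 / 15 = 2 * (π / 30) by ring, show π * (1/2) / 15 = π / 30 by ring,
    show π * 3 / 15 = 2 * (π / 10) by ring, show π * (3/2) / 15 = π / 10 by ring,
    sin_two_mul_div_sin h30, sin_two_mul_div_sin h10, show π / 10 = 3 * (π / 30) by ring,
    show π / 15 = 2 * (π / 30) by ring, ← four_mul_cos_mul_cos_three_mul]
  ring

lemma qdim_vectorial_eq :
    qnum 15 (5/2) * qnum 15 3 / (qnum 15 1 * qnum 15 (3/2)) = cos (π / 10) / sin (π / 15) := by
  rw [qnum_mul_div_qnum_mul (sin_pi_div_pos (by norm_num)).ne', mul_div_mul_comm,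
    show π * (5/2) / 15 = π / 6 by ring, show π * 1 / 15 = π / 15 by ring,
    show π * 3 / 15 = 2 * (π / 10) by ring, show π * (3/2) / 15 = π / 10 by ring,
    sin_two_mul_div_sin (sin_pi_div_pos (by norm_num)).ne', sin_pi_div_six]
  ring

/-- Quantum dimensions of the two fundamental representations of B2 at level 12
(altitude κ = 15): the spinorial `{0,1}` and the vectorial `{1,0}`. -/
theorem b2_level12_fundamental_qdims :
    qnum 15 1 * qnum 15 3 / (qnum 15 (1/2) * qnum 15 (3/2))
      = (Real.sqrt 5 + Real.sqrt (15 + 6 * Real.sqrt 5)) / 2 ∧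
    qnum 15 (5/2) * qnum 15 3 / (qnum 15 1 * qnum 15 (3/2))
      = (5 + 3 * Real.sqrt 5 + Real.sqrt (6 * (5 + Real.sqrt 5))) / 4 := by
  have h3 := sq_sqrt (show (0 : ℝ) ≤ 3 by norm_num)
  have h5 := sq_sqrt (show (0 : ℝ) ≤ 5 by norm_num)
  have ha := sq_sqrt (show (0 : ℝ) ≤ 10 + 2 * √5 by positivity)
  constructor
  · rw [qdim_spinorial_eq, cos_pi_div_fifteen, sqrt_fifteen_add_six_mul_sqrt_five]
    linear_combination (√(10 + 2 * √5) ^ 2 / 16) * h3 + (3 / 16) * ha + (1 / 16) * h5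
  · rw [qdim_vectorial_eq, div_eq_iff (sin_pi_div_pos (by norm_num)).ne', cos_pi_div_ten,
      sin_pi_div_fifteen, sqrt_six_mul_five_add_sqrt_five]
    linear_combination
      (√(10 + 2 * √5) * (√5 - 1) / 32) * h3 + (3 * √3 / 32) * h5 - (√3 / 32) * ha
end

section
/- For κ = 6, with ⟨x⟩ = sin(πx/6)/sin(π/6) for real x, define for nonnegative integers λ1, λ2 the quantity qdimB2(λ1,λ2) = ⟨λ1+1⟩·⟨λ2/2+1/2⟩·⟨λ1+λ2/2+3/2⟩·⟨λ1+λ2+2⟩ / (⟨1/2⟩·⟨1⟩·⟨3/2⟩·⟨2⟩). Then the sum of qdimB2(λ1,λ2)² over all pairs of nonnegative integers (λ1,λ2) with λ1+λ2 ≤ 3 equals 24(2+√3). -/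
/-- The quantum Weyl dimension of the irreducible B2 representation of highest weight
`{λ1,λ2}` at altitude κ = 6 (level k = 3). -/
noncomputable def qdimB2 (lam1 lam2 : ℕ) : ℝ :=
    qnum 6 (lam1 + 1) * qnum 6 (lam2 / 2 + 1/2) * qnum 6 (lam1 + lam2 / 2 + 3/2) *
      qnum 6 (lam1 + lam2 + 2) /
    (qnum 6 (1/2) * qnum 6 1 * qnum 6 (3/2) * qnum 6 2)

open Real

lemma sin_pi_div_twelve' : Real.sin (π/12) = (√6 - √2)/4 := by
  have h : (π/12 : ℝ) = π/4 - π/6 := by ring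
  rw [h, Real.sin_sub, Real.sin_pi_div_four, Real.cos_pi_div_four, Real.sin_pi_div_six,
    Real.cos_pi_div_six]
  rw [show (6:ℝ) = 2*3 by norm_num, Real.sqrt_mul (by norm_num)]
  ring

lemma sin_five_pi_div_twelve : Real.sin (5*π/12) = (√6 + √2)/4 := by
  have h : (5*π/12 : ℝ) = π/4 + π/6 := by ring
  rw [h, Real.sin_add, Real.sin_pi_div_four, Real.cos_pi_div_four, Real.sin_pi_div_six,
    Real.cos_pi_div_six]
  rw [show (6:ℝ) = 2*3 by norm_num, Real.sqrt_mul (by norm_num)]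
  ring

lemma qn_half : qnum 6 (1/2) = (√6 - √2)/2 := by
  rw [qnum, show Real.pi * (1/2)/6 = π/12 by ring, sin_pi_div_twelve', Real.sin_pi_div_six]
  ring

lemma qn_one : qnum 6 1 = 1 := by
  rw [qnum, show Real.pi * 1/6 = π/6 by ring, Real.sin_pi_div_six]
  norm_num

lemma qn_3half : qnum 6 (3/2) = √2 := by
  rw [qnum, show Real.pi * (3/2)/6 = π/4 by ring, Real.sin_pi_div_four, Real.sin_pi_div_six]
  ring

lemma qn_two : qnum 6 2 = √3 := by
  rw [qnum, show Real.pi * 2/6 = π/3 by ring, Real.sin_pi_div_three, Real.sin_pi_div_six]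
  ring

lemma qn_5half : qnum 6 (5/2) = (√6 + √2)/2 := by
  rw [qnum, show Real.pi * (5/2)/6 = 5*π/12 by ring, sin_five_pi_div_twelve, Real.sin_pi_div_six]
  ring

lemma qn_three : qnum 6 3 = 2 := by
  rw [qnum, show Real.pi * 3/6 = π/2 by ring, Real.sin_pi_div_two, Real.sin_pi_div_six]
  norm_num

lemma qn_7half : qnum 6 (7/2) = (√6 + √2)/2 := by
  rw [qnum, show Real.pi * (7/2)/6 = π - 5*π/12 by ring, Real.sin_pi_sub,
    sin_five_pi_div_twelve, Real.sin_pi_div_six]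
  ring

lemma qn_four : qnum 6 4 = √3 := by
  rw [qnum, show Real.pi * 4/6 = π - π/3 by ring, Real.sin_pi_sub, Real.sin_pi_div_three,
    Real.sin_pi_div_six]
  ring

lemma qn_9half : qnum 6 (9/2) = √2 := by
  rw [qnum, show Real.pi * (9/2)/6 = π - π/4 by ring, Real.sin_pi_sub, Real.sin_pi_div_four,
    Real.sin_pi_div_six]
  ring

lemma qn_five : qnum 6 5 = 1 := by
  rw [qnum, show Real.pi * 5/6 = π - π/6 by ring, Real.sin_pi_sub, Real.sin_pi_div_six]
  norm_num

lemma sqrt6_eq : √6 = √2 * √3 := by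
  rw [show (6:ℝ) = 2*3 by norm_num, Real.sqrt_mul (by norm_num)]

lemma h2 : √2 ^ 2 = 2 := Real.sq_sqrt (by norm_num)
lemma h3 : √3 ^ 2 = 3 := Real.sq_sqrt (by norm_num)

lemma denom_val : qnum 6 (1/2) * qnum 6 1 * qnum 6 (3/2) * qnum 6 2 = 3 - √3 := by
  rw [qn_half, qn_one, qn_3half, qn_two, sqrt6_eq]
  linear_combination ((√3^2 - √3)/2) * h2 + h3

lemma denom_pos : (0:ℝ) < 3 - √3 := by
  nlinarith [h3, Real.sqrt_nonneg 3]

lemma d00 : qdimB2 0 0 = 1 := by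
  rw [qdimB2, denom_val]
  norm_num
  rw [qn_one, qn_half, qn_3half, qn_two, div_eq_iff denom_pos.ne', sqrt6_eq]
  linear_combination ((√3^2 - √3)/2) * h2 + h3

lemma d01 : qdimB2 0 1 = 1 + √3 := by
  rw [qdimB2, denom_val]; norm_num
  rw [qn_one, qn_two, qn_three, div_eq_iff denom_pos.ne']
  linear_combination h3

lemma d02 : qdimB2 0 2 = 2 + √3 := by
  rw [qdimB2, denom_val]; norm_num
  rw [qn_one, qn_3half, qn_5half, qn_four, div_eq_iff denom_pos.ne', sqrt6_eq]
  linear_combination ((√3 + √3^2)/2) * h2 + 2 * h3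

lemma d03 : qdimB2 0 3 = 1 + √3 := by
  rw [qdimB2, denom_val]; norm_num
  rw [qn_one, qn_two, qn_three, qn_five, div_eq_iff denom_pos.ne']
  linear_combination h3

lemma d10 : qdimB2 1 0 = 1 + √3 := by
  rw [qdimB2, denom_val]; norm_num
  rw [qn_two, qn_half, qn_5half, qn_three, div_eq_iff denom_pos.ne', sqrt6_eq]
  linear_combination ((√3^3 - √3)/2) * h2 + (1 + √3) * h3

lemma d11 : qdimB2 1 1 = 3 + √3 := by
  rw [qdimB2, denom_val]; norm_num
  rw [qn_two, qn_one, qn_three, qn_four, div_eq_iff denom_pos.ne']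
  linear_combination 3 * h3

lemma d12 : qdimB2 1 2 = 2 + √3 := by
  rw [qdimB2, denom_val]; norm_num
  rw [qn_two, qn_3half, qn_7half, qn_five, div_eq_iff denom_pos.ne', sqrt6_eq]
  linear_combination ((√3 + √3^2)/2) * h2 + 2 * h3

lemma d20 : qdimB2 2 0 = 1 + √3 := by
  rw [qdimB2, denom_val]; norm_num
  rw [qn_three, qn_half, qn_7half, qn_four, div_eq_iff denom_pos.ne', sqrt6_eq]
  linear_combination ((√3^3 - √3)/2) * h2 + (1 + √3) * h3

lemma d21 : qdimB2 2 1 = 1 + √3 := by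
  rw [qdimB2, denom_val]; norm_num
  rw [qn_three, qn_one, qn_four, qn_five, div_eq_iff denom_pos.ne']
  linear_combination h3

lemma d30 : qdimB2 3 0 = 1 := by
  rw [qdimB2, denom_val]; norm_num
  rw [qn_four, qn_half, qn_9half, qn_five, div_eq_iff denom_pos.ne', sqrt6_eq]
  linear_combination ((√3^2 - √3)/2) * h2 + h3

/-- The global dimension of the fusion category `A₃(B₂)`: the sum of the squares of the
quantum dimensions of the ten simple objects (weights with λ1+λ2 ≤ 3) is `24(2+√3)`. -/
theorem global_dimension_A3_B2 :
    ∑ p ∈ (Finset.range 4 ×ˢ Finset.range 4).filter (fun p => p.1 + p.2 ≤ 3),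
      (qdimB2 p.1 p.2)^2 = 24 * (2 + Real.sqrt 3) := by
  rw [Finset.sum_filter, Finset.sum_product]
  simp only [Finset.sum_range_succ, Finset.sum_range_zero]
  norm_num [d00, d01, d02, d03, d10, d11, d12, d20, d21, d30]
  linear_combination 8 * h3
end
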